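/- If T is a hyponormal bounded linear operator with closed range on a complex Hilbert space, then Tⁿ has closed range for all n ≥ 1. -/

import Mathlib

/-!
Hyponormality gives `ker T ⊆ ker T*`, hence `ran T ⊆ (ker T*)ᗮ ⊆ (ker T)ᗮ`. Since `ran T` is
closed, the open mapping theorem makes `T` bounded below on `(ker T)ᗮ`, so `T` is bounded below
on the invariant subspace `ran T`, and then so is every power `Tᵐ`. Thus
`ran Tᵐ⁺¹ = Tᵐ (ran T)` is the image of a complete space under a map bounded below: it is closed.
-/

open ContinuousLinearMap
open scoped NNReal

theorem Submodule.norm_le_of_mem_orthogonal_of_sub_mem {𝕜 E : Type*} [RCLike 𝕜]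
    [NormedAddCommGroup E] [InnerProductSpace 𝕜 E] {K : Submodule 𝕜 E} {x y : E}
    (hx : x ∈ Kᗮ) (hyx : y - x ∈ K) : ‖x‖ ≤ ‖y‖ := by
  have hpyth := norm_add_sq_eq_norm_sq_add_norm_sq_of_inner_eq_zero x (y - x)
    (K.inner_left_of_mem_orthogonal hyx hx)
  rw [add_sub_cancel] at hpyth
  nlinarith [norm_nonneg x, norm_nonneg y, mul_self_nonneg ‖y - x‖]

namespace ContinuousLinearMap

section NormedSpace

variable {𝕜 E F : Type*} [NontriviallyNormedField 𝕜] [NormedAddCommGroup E] [NormedSpace 𝕜 E]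
  [NormedAddCommGroup F] [NormedSpace 𝕜 F]

theorem isClosed_map_of_norm_le_mul_norm_apply [CompleteSpace E] (f : E →L[𝕜] F)
    {p : Submodule 𝕜 E} (hp : IsClosed (p : Set E)) {C : ℝ≥0}
    (hC : ∀ x ∈ p, ‖x‖ ≤ C * ‖f x‖) : IsClosed (p.map (f : E →ₗ[𝕜] F) : Set F) := by
  have : CompleteSpace p := hp.completeSpace_coe
  have hanti : AntilipschitzWith C (f ∘L p.subtypeL) :=
    (f ∘L p.subtypeL).antilipschitz_of_bound fun x => hC x x.2
  convert hanti.isClosed_range (f ∘L p.subtypeL).uniformContinuous using 1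
  ext
  simp

theorem norm_le_pow_mul_norm_pow_apply {T : E →L[𝕜] E} {s : Set E} (hs : Set.MapsTo T s s)
    {C : ℝ≥0} (hC : ∀ x ∈ s, ‖x‖ ≤ C * ‖T x‖) (n : ℕ) :
    ∀ x ∈ s, ‖x‖ ≤ C ^ n * ‖(T ^ n) x‖ := by
  induction n with
  | zero => simp
  | succ n ih =>
    intro x hx
    calc ‖x‖ ≤ C * ‖T x‖ := hC x hx
      _ ≤ C * (C ^ n * ‖(T ^ n) (T x)‖) := by gcongr; exact ih _ (hs hx)
      _ = C ^ (n + 1) * ‖(T ^ (n + 1)) x‖ := by rw [pow_succ', pow_succ, mul_assoc]; rfl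

theorem range_pow_succ_eq_map_range (T : E →L[𝕜] E) (n : ℕ) :
    ((T ^ (n + 1) : E →L[𝕜] E) : E →ₗ[𝕜] E).range =
      T.range.map ((T ^ n : E →L[𝕜] E) : E →ₗ[𝕜] E) := by
  rw [pow_succ, toLinearMap_mul]
  exact LinearMap.range_comp _ _

end NormedSpace

section InnerProductSpace

variable {𝕜 E F : Type*} [RCLike 𝕜] [NormedAddCommGroup E] [InnerProductSpace 𝕜 E]
  [CompleteSpace E]

theorem exists_norm_le_mul_norm_apply_of_isClosed_range [NormedAddCommGroup F]
    [NormedSpace 𝕜 F] [CompleteSpace F] {T : E →L[𝕜] F} (hT : IsClosed (T.range : Set F)) :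
    ∃ C : ℝ≥0, ∀ x ∈ T.kerᗮ, ‖x‖ ≤ C * ‖T x‖ := by
  have : CompleteSpace T.range := hT.completeSpace_coe
  obtain ⟨C, hC0, hC⟩ := T.rangeRestrict.exists_preimage_norm_le T.surjective_rangeRestrict
  refine ⟨⟨C, hC0.le⟩, fun x hx => ?_⟩
  obtain ⟨y, hyx, hy⟩ := hC (T.rangeRestrict x)
  have hTyx : T y = T x := congrArg Subtype.val hyx
  have hsub : y - x ∈ T.ker := by simp [hTyx]
  exact (Submodule.norm_le_of_mem_orthogonal_of_sub_mem hx hsub).trans hy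

variable {T : E →L[𝕜] E}

theorem ker_le_ker_adjoint_of_norm_adjoint_apply_le (h : ∀ x, ‖adjoint T x‖ ≤ ‖T x‖) :
    T.ker ≤ (adjoint T).ker := fun x hx =>
  norm_le_zero_iff.mp ((h x).trans_eq (by simpa using hx))

theorem range_le_orthogonal_ker_of_ker_le_ker_adjoint (h : T.ker ≤ (adjoint T).ker) :
    T.range ≤ T.kerᗮ :=
  calc T.range ≤ T.rangeᗮᗮ := T.range.le_orthogonal_orthogonal
    _ = (adjoint T).kerᗮ := by rw [orthogonal_range]
    _ ≤ T.kerᗮ := Submodule.orthogonal_le h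

end InnerProductSpace

end ContinuousLinearMap

theorem hyponormal_pow_closed_range
    {H : Type*} [NormedAddCommGroup H] [InnerProductSpace ℂ H] [CompleteSpace H]
    (T : H →L[ℂ] H) (hhyp : ∀ x : H, ‖adjoint T x‖ ≤ ‖T x‖)
    (hT : IsClosed (LinearMap.range (T : H →ₗ[ℂ] H) : Set H)) :
    ∀ n : ℕ, 1 ≤ n → IsClosed (LinearMap.range ((T ^ n : H →L[ℂ] H) : H →ₗ[ℂ] H) : Set H) := by
  obtain ⟨C, hC⟩ := exists_norm_le_mul_norm_apply_of_isClosed_range hT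
  have hrange : T.range ≤ T.kerᗮ := range_le_orthogonal_ker_of_ker_le_ker_adjoint
    (ker_le_ker_adjoint_of_norm_adjoint_apply_le hhyp)
  have hbound : ∀ x ∈ T.range, ‖x‖ ≤ C * ‖T x‖ := fun x hx => hC x (hrange hx)
  intro n hn
  obtain ⟨m, rfl⟩ := Nat.exists_eq_add_one.mpr hn
  rw [range_pow_succ_eq_map_range]
  refine isClosed_map_of_norm_le_mul_norm_apply _ hT (C := C ^ m) ?_
  exact_mod_cast norm_le_pow_mul_norm_pow_apply (fun x _ => T.mem_range_self x) hbound m
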